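/- Let X = ∏_{i=1}^n [0,m_i]_ℤ ⊂ ℤⁿ and let A = ∏_{i=1}^n {0,m_i} be its set of corners. (a) If Y = ∏_{i=1}^n [a_i,b_i]_ℤ with [0,m_i]_ℤ ⊂ [a_i,b_i]_ℤ for all i, and f: X → Y is c₁-continuous with A ⊂ Fix(f), then X ⊂ Fix(f). (b) A is a freezing set for (X,c₁). (c) If n = 2 and m₁ ≥ 1, m₂ ≥ 1, then A is a minimal freezing set for (X,c₁). -/
import Mathlib

/-- `c_u` adjacency on `ℤⁿ`: distinct points that differ by at most 1 in every
coordinate and differ in at most `u` coordinates. -/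
def cuAdj (n u : ℕ) (x y : Fin n → ℤ) : Prop :=
  x ≠ y ∧ (∀ i, (x i - y i).natAbs ≤ 1) ∧
    (Finset.univ.filter fun i => x i ≠ y i).card ≤ u

/-- `(κ,λ)`-continuity of `f` on `X`: adjacent points have equal or adjacent images. -/
def DigCont {α β : Type*} (κ : α → α → Prop) (lam : β → β → Prop)
    (X : Set α) (f : α → β) : Prop :=
  ∀ x ∈ X, ∀ x' ∈ X, κ x x' → f x = f x' ∨ lam (f x) (f x')

/-- `f ∈ C(X,κ)`: a `κ`-continuous self-map of `X`. -/
def InC {α : Type*} (κ : α → α → Prop) (X : Set α) (f : α → α) : Prop :=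
  Set.MapsTo f X X ∧ DigCont κ κ X f

/-- `A` is a freezing set for `(X,κ)`: every `f ∈ C(X,κ)` fixing `A`
pointwise is the identity on `X`. -/
def FreezingSet {α : Type*} (κ : α → α → Prop) (X A : Set α) : Prop :=
  ∀ f, InC κ X f → (∀ a ∈ A, f a = a) → ∀ x ∈ X, f x = x

namespace Stmt10Aux

lemma cuAdj_symm {n u : ℕ} {x y : Fin n → ℤ} (h : cuAdj n u x y) : cuAdj n u y x := by
  obtain ⟨h1, h2, h3⟩ := h
  refine ⟨h1.symm, fun i => by have := h2 i; omega, ?_⟩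
  have : (Finset.univ.filter fun i => y i ≠ x i) = (Finset.univ.filter fun i => x i ≠ y i) := by
    ext i; simp [ne_comm]
  rw [this]; exact h3

lemma step_bound {n : ℕ} {y z : Fin n → ℤ} (h : y = z ∨ cuAdj n 1 y z) (i : Fin n) :
    (y i - z i).natAbs ≤ 1 := by
  rcases h with h | h
  · simp [h]
  · exact h.2.1 i

lemma only_coord {n : ℕ} {y z : Fin n → ℤ} (h : cuAdj n 1 y z) {i : Fin n}
    (hi : y i ≠ z i) {j : Fin n} (hj : j ≠ i) : y j = z j := by
  by_contra hj'
  have hsub : ({i, j} : Finset (Fin n)) ⊆ Finset.univ.filter fun k => y k ≠ z k := by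
    intro k hk
    simp only [Finset.mem_insert, Finset.mem_singleton] at hk
    simp only [Finset.mem_filter, Finset.mem_univ, true_and]
    rcases hk with rfl | rfl <;> assumption
  have hc := Finset.card_le_card hsub
  rw [Finset.card_pair (Ne.symm hj)] at hc
  have := h.2.2
  omega

lemma travel (g : ℤ → ℤ) (s : ℤ) :
    ∀ t, s ≤ t → (∀ u, s ≤ u → u < t → (g (u + 1) - g u).natAbs ≤ 1) →
      (g t - g s).natAbs ≤ (t - s).toNat := by
  refine Int.le_induction ?_ ?_
  · intro _; omega
  · intro t ht ih hstep
    have h1 := ih (fun u hu hut => hstep u hu (by omega))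
    have h2 := hstep t ht (by omega)
    omega

lemma mem_X_update {n : ℕ} {m : Fin n → ℤ} {x : Fin n → ℤ}
    (hx : x ∈ {x : Fin n → ℤ | ∀ i, x i ∈ Set.Icc 0 (m i)}) (i : Fin n) (t : ℤ)
    (h0 : 0 ≤ t) (h1 : t ≤ m i) :
    Function.update x i t ∈ {x : Fin n → ℤ | ∀ i, x i ∈ Set.Icc 0 (m i)} := by
  intro j
  rcases eq_or_ne j i with rfl | hj
  · simp only [Function.update_self, Set.mem_Icc]; exact ⟨h0, h1⟩
  · simpa only [Function.update_of_ne hj] using hx j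

lemma adj_update {n : ℕ} (x : Fin n → ℤ) (i : Fin n) (u : ℤ) :
    cuAdj n 1 (Function.update x i u) (Function.update x i (u + 1)) := by
  refine ⟨?_, ?_, ?_⟩
  · intro h
    have := congrFun h i
    simp only [Function.update_self] at this
    omega
  · intro j
    rcases eq_or_ne j i with rfl | hj
    · simp only [Function.update_self]; omega
    · simp only [Function.update_of_ne hj]; omega
  · have hsub : (Finset.univ.filter fun j =>
        Function.update x i u j ≠ Function.update x i (u + 1) j) ⊆ {i} := by
      intro j hj
      simp only [Finset.mem_filter, Finset.mem_univ, true_and] at hj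
      simp only [Finset.mem_singleton]
      by_contra hne
      rw [Function.update_of_ne hne, Function.update_of_ne hne] at hj
      exact hj rfl
    have := Finset.card_le_card hsub
    simpa using this

lemma line_fix {n : ℕ} (m : Fin n → ℤ) (f : (Fin n → ℤ) → Fin n → ℤ)
    (hc : DigCont (cuAdj n 1) (cuAdj n 1) {x : Fin n → ℤ | ∀ i, x i ∈ Set.Icc 0 (m i)} f)
    (x : Fin n → ℤ) (hx : x ∈ {x : Fin n → ℤ | ∀ i, x i ∈ Set.Icc 0 (m i)}) (i : Fin n)
    (h0 : f (Function.update x i 0) = Function.update x i 0)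
    (hM : f (Function.update x i (m i)) = Function.update x i (m i)) :
    ∀ t, 0 ≤ t → t ≤ m i → f (Function.update x i t) = Function.update x i t := by
  set q : ℤ → (Fin n → ℤ) := fun t => Function.update x i t with hq
  have hstep : ∀ u (j : Fin n), 0 ≤ u → u < m i →
      (f (q u) j - f (q (u + 1)) j).natAbs ≤ 1 := by
    intro u j hu hum
    have hmem : q u ∈ {x : Fin n → ℤ | ∀ i, x i ∈ Set.Icc 0 (m i)} :=
      mem_X_update hx i u hu (by omega)
    have hmem' : q (u + 1) ∈ {x : Fin n → ℤ | ∀ i, x i ∈ Set.Icc 0 (m i)} :=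
      mem_X_update hx i (u + 1) (by omega) (by omega)
    exact step_bound (hc _ hmem _ hmem' (adj_update x i u)) j
  have e0 : f (q 0) i = 0 := by
    rw [show q 0 = Function.update x i 0 from rfl, h0]; simp
  have eM : f (q (m i)) i = m i := by
    rw [show q (m i) = Function.update x i (m i) from rfl, hM]; simp
  have hg : ∀ t, 0 ≤ t → t ≤ m i → f (q t) i = t := by
    intro t ht htm
    have t1 : (f (q t) i - f (q 0) i).natAbs ≤ (t - 0).toNat :=
      travel (fun u => f (q u) i) 0 t ht
        (fun u hu hut => by
          show (f (q (u + 1)) i - f (q u) i).natAbs ≤ 1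
          have := hstep u i hu (by omega); omega)
    have t2 : (f (q (m i)) i - f (q t) i).natAbs ≤ (m i - t).toNat :=
      travel (fun u => f (q u) i) t (m i) htm
        (fun u hu hut => by
          show (f (q (u + 1)) i - f (q u) i).natAbs ≤ 1
          have := hstep u i (by omega) hut; omega)
    omega
  have hside : ∀ t, 0 ≤ t → t ≤ m i → ∀ j, j ≠ i → f (q t) j = x j := by
    have : ∀ t, 0 ≤ t → (t ≤ m i → ∀ j, j ≠ i → f (q t) j = x j) := by
      refine Int.le_induction ?_ ?_
      · intro _ j hj
        rw [show q 0 = Function.update x i 0 from rfl, h0]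
        exact Function.update_of_ne hj _ _
      · intro t ht ih htm j hj
        have hmem : q t ∈ {x : Fin n → ℤ | ∀ i, x i ∈ Set.Icc 0 (m i)} :=
          mem_X_update hx i t ht (by omega)
        have hmem' : q (t + 1) ∈ {x : Fin n → ℤ | ∀ i, x i ∈ Set.Icc 0 (m i)} :=
          mem_X_update hx i (t + 1) (by omega) (by omega)
        have hne : f (q t) i ≠ f (q (t + 1)) i := by
          rw [hg t ht (by omega), hg (t + 1) (by omega) htm]; omega
        rcases hc _ hmem _ hmem' (adj_update x i t) with he | ha
        · exact absurd (congrFun he i) hne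
        · have heq := only_coord ha hne hj
          rw [← heq]
          exact ih (by omega) j hj
    intro t ht htm; exact this t ht htm
  intro t ht htm
  funext j
  rcases eq_or_ne j i with rfl | hj
  · rw [hg t ht htm]; simp [hq]
  · rw [hside t ht htm j hj]
    exact (Function.update_of_ne hj _ _).symm

lemma core {n : ℕ} (m : Fin n → ℤ) (hm : ∀ i, 0 ≤ m i)
    (f : (Fin n → ℤ) → Fin n → ℤ)
    (hc : DigCont (cuAdj n 1) (cuAdj n 1) {x : Fin n → ℤ | ∀ i, x i ∈ Set.Icc 0 (m i)} f)
    (hfix : ∀ p : Fin n → ℤ, (∀ i, p i = 0 ∨ p i = m i) → f p = p) :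
    ∀ p ∈ {x : Fin n → ℤ | ∀ i, x i ∈ Set.Icc 0 (m i)}, f p = p := by
  suffices h : ∀ k : ℕ, ∀ p ∈ {x : Fin n → ℤ | ∀ i, x i ∈ Set.Icc 0 (m i)},
      (Finset.univ.filter fun i => p i ≠ 0 ∧ p i ≠ m i).card ≤ k → f p = p by
    intro p hp; exact h _ p hp le_rfl
  intro k
  induction k with
  | zero =>
    intro p _ hcard
    refine hfix p fun i => ?_
    by_contra hcon
    push_neg at hcon
    have hi : i ∈ Finset.univ.filter fun i => p i ≠ 0 ∧ p i ≠ m i := by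
      simp [hcon.1, hcon.2]
    have := Finset.card_pos.mpr ⟨i, hi⟩
    omega
  | succ k ih =>
    intro p hp hcard
    by_cases hle : (Finset.univ.filter fun i => p i ≠ 0 ∧ p i ≠ m i).card ≤ k
    · exact ih p hp hle
    · obtain ⟨i, hi⟩ := Finset.card_pos.mp (show 0 <
        (Finset.univ.filter fun i => p i ≠ 0 ∧ p i ≠ m i).card by omega)
      simp only [Finset.mem_filter, Finset.mem_univ, true_and] at hi
      have hcard0 : ∀ t0 : ℤ, t0 = 0 ∨ t0 = m i →
          (Finset.univ.filter fun j => Function.update p i t0 j ≠ 0 ∧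
            Function.update p i t0 j ≠ m j).card ≤ k := by
        intro t0 ht0
        have hsub : (Finset.univ.filter fun j => Function.update p i t0 j ≠ 0 ∧
            Function.update p i t0 j ≠ m j) ⊆
            (Finset.univ.filter fun i => p i ≠ 0 ∧ p i ≠ m i).erase i := by
          intro j hj
          simp only [Finset.mem_filter, Finset.mem_univ, true_and] at hj
          rcases eq_or_ne j i with rfl | hji
          · rw [Function.update_self] at hj
            rcases ht0 with rfl | rfl
            · exact absurd rfl hj.1
            · exact absurd rfl hj.2
          · rw [Function.update_of_ne hji] at hj
            simp only [Finset.mem_erase, Finset.mem_filter, Finset.mem_univ, true_and]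
            exact ⟨hji, hj⟩
        have h1 := Finset.card_le_card hsub
        have h2 : ((Finset.univ.filter fun i => p i ≠ 0 ∧ p i ≠ m i).erase i).card =
            (Finset.univ.filter fun i => p i ≠ 0 ∧ p i ≠ m i).card - 1 :=
          Finset.card_erase_of_mem (by simp [hi.1, hi.2])
        omega
      have e0 := ih _ (mem_X_update hp i 0 le_rfl (hm i)) (hcard0 0 (Or.inl rfl))
      have eM := ih _ (mem_X_update hp i (m i) (hm i) le_rfl) (hcard0 (m i) (Or.inr rfl))
      have hfin := line_fix m f hc p hp i e0 eM (p i) (hp i).1 (hp i).2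
      rwa [Function.update_eq_self] at hfin

end Stmt10Aux

open Stmt10Aux in
/-- For the digital cube `X = ∏ [0,mᵢ]_ℤ` with corner set `A = ∏ {0,mᵢ}`:
(a) any `c₁`-continuous `f : X → Y` into a larger cube `Y = ∏ [aᵢ,bᵢ]_ℤ`
fixing `A` pointwise fixes `X` pointwise; (b) `A` is a freezing set for
`(X,c₁)`; (c) for `n = 2` (with each `mᵢ ≥ 1`) it is a minimal freezing set. -/
theorem stmt10 {n : ℕ} (m : Fin n → ℤ) (hm : ∀ i, 0 ≤ m i)
    (X A : Set (Fin n → ℤ))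
    (hX : X = {x | ∀ i, x i ∈ Set.Icc 0 (m i)})
    (hA : A = {x | ∀ i, x i = 0 ∨ x i = m i}) :
    (∀ a b : Fin n → ℤ, (∀ i, a i ≤ 0) → (∀ i, m i ≤ b i) →
      ∀ f : (Fin n → ℤ) → Fin n → ℤ,
        Set.MapsTo f X {y | ∀ i, y i ∈ Set.Icc (a i) (b i)} →
        DigCont (cuAdj n 1) (cuAdj n 1) X f →
        (∀ p ∈ A, f p = p) → ∀ p ∈ X, f p = p) ∧
    FreezingSet (cuAdj n 1) X A ∧
    (n = 2 → (∀ i, 1 ≤ m i) → ∀ B ⊂ A, ¬ FreezingSet (cuAdj n 1) X B) := by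
  subst hX hA
  refine ⟨?_, ?_, ?_⟩
  · intro a b _ _ f _ hcont hfixA p hp
    exact core m hm f hcont (fun p hpA => hfixA p hpA) p hp
  · intro f hf hfixA p hp
    exact core m hm f hf.2 (fun p hpA => hfixA p hpA) p hp
  · intro h2 hm1 B hBsub hF
    subst h2
    obtain ⟨c, hcA, hcB⟩ := Set.exists_of_ssubset hBsub
    have hcA' : ∀ i, c i = 0 ∨ c i = m i := hcA
    set d : Fin 2 → ℤ := fun i => if c i = 0 then 1 else -1 with hd
    have hdpm : ∀ i, d i = 1 ∨ d i = -1 := by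
      intro i; by_cases h : c i = 0 <;> simp [hd, h]
    have hcX : c ∈ {x : Fin 2 → ℤ | ∀ i, x i ∈ Set.Icc 0 (m i)} := by
      intro i
      rcases hcA' i with h | h <;> rw [h] <;> exact ⟨by simp [hm i], by simp [hm i]⟩
    have hcd_mem : c + d ∈ {x : Fin 2 → ℤ | ∀ i, x i ∈ Set.Icc 0 (m i)} := by
      intro i
      have h1 := hm1 i
      rcases hcA' i with h | h
      · have : d i = 1 := by simp [hd, h]
        simp only [Pi.add_apply, this, h, Set.mem_Icc]; omega
      · have hne : c i ≠ 0 := by rw [h]; omega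
        have : d i = -1 := by simp [hd, hne]
        simp only [Pi.add_apply, this, h, Set.mem_Icc]; omega
    set g : (Fin 2 → ℤ) → (Fin 2 → ℤ) := fun x => if x = c then c + d else x with hg
    have key : ∀ x' ∈ {x : Fin 2 → ℤ | ∀ i, x i ∈ Set.Icc 0 (m i)}, x' ≠ c →
        cuAdj 2 1 c x' → cuAdj 2 1 (c + d) x' := by
      intro x' hx' _ hadj
      obtain ⟨hne0, hb, hcard⟩ := hadj
      obtain ⟨j, hj⟩ : ∃ j, c j ≠ x' j := by
        by_contra h; push_neg at h; exact hne0 (funext h)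
      have huniq : ∀ l, l ≠ j → c l = x' l := fun l hl =>
        only_coord ⟨hne0, hb, hcard⟩ hj hl
      have hxj : x' j = c j + d j := by
        have h1 := hb j
        have h2 := (hx' j).1
        have h2' := (hx' j).2
        by_cases hc0 : c j = 0
        · have hdj : d j = 1 := by simp [hd, hc0]
          rw [hdj, hc0]; rw [hc0] at hj h1; omega
        · have hcm : c j = m j := (hcA' j).resolve_left hc0
          have hdj : d j = -1 := by simp [hd, hc0]
          rw [hdj, hcm]; rw [hcm] at hj h1; omega
      obtain ⟨k, hkj, hall⟩ :=
        (by decide : ∀ j : Fin 2, ∃ k, k ≠ j ∧ ∀ l : Fin 2, l = j ∨ l = k) j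
      have hck := huniq k hkj
      refine ⟨?_, ?_, ?_⟩
      · intro h
        have hk := congrFun h k
        simp only [Pi.add_apply] at hk
        rcases hdpm k with h' | h' <;> omega
      · intro l
        rcases hall l with rfl | rfl
        · simp only [Pi.add_apply]; omega
        · simp only [Pi.add_apply]
          rcases hdpm l with h' | h' <;> omega
      · have hsub : (Finset.univ.filter fun l => (c + d) l ≠ x' l) ⊆ {k} := by
          intro l hl
          simp only [Finset.mem_filter, Finset.mem_univ, true_and] at hl
          simp only [Finset.mem_singleton]
          rcases hall l with rfl | rfl
          · exact absurd (by simp only [Pi.add_apply]; omega) hl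
          · rfl
        have := Finset.card_le_card hsub
        simpa using this
    have hcont : DigCont (cuAdj 2 1) (cuAdj 2 1)
        {x : Fin 2 → ℤ | ∀ i, x i ∈ Set.Icc 0 (m i)} g := by
      intro x hx x' hx' hadj
      by_cases h1 : x = c <;> by_cases h2 : x' = c
      · exact absurd (h1.trans h2.symm) hadj.1
      · subst h1
        right
        simp only [hg, if_pos rfl, if_neg h2]
        exact key x' hx' h2 hadj
      · subst h2
        right
        simp only [hg, if_pos rfl, if_neg h1]
        exact cuAdj_symm (key x hx h1 (cuAdj_symm hadj))
      · right
        simp only [hg, if_neg h1, if_neg h2]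
        exact hadj
    have hmaps : Set.MapsTo g {x : Fin 2 → ℤ | ∀ i, x i ∈ Set.Icc 0 (m i)}
        {x : Fin 2 → ℤ | ∀ i, x i ∈ Set.Icc 0 (m i)} := by
      intro x hx
      by_cases h : x = c
      · simp only [hg, Set.mem_setOf_eq] at *
        rw [if_pos h]; exact hcd_mem
      · simp only [hg, Set.mem_setOf_eq] at *
        rw [if_neg h]; exact hx
    have hfixB : ∀ a ∈ B, g a = a := by
      intro a ha
      have : a ≠ c := fun h => hcB (h ▸ ha)
      simp only [hg, if_neg this]
    have hgc := hF g ⟨hmaps, hcont⟩ hfixB c hcX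
    simp only [hg, if_pos rfl] at hgc
    have h0 := congrFun hgc 0
    simp only [Pi.add_apply] at h0
    rcases hdpm 0 with h' | h' <;> omega
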